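/- (LP-representation of the Mood statistic.) Let n₁, n₂ ≥ 1, n = n₁ + n₂, let y_i = 0 for i = 1,…,n₁ and y_i = 1 for i = n₁+1,…,n, and let x₁,…,x_n be distinct real numbers with ranks R_i = #{j : x_j ≤ x_i}. Define T₁(y_i; F̃_Y) = −√(n₂/n₁) for i ≤ n₁ and √(n₁/n₂) for i > n₁, and T₂(x_i; F̃_X) = (6√5/n²)(R_i − (n+1)/2)² − √5/2. Then the empirical LP-comean L̂P[1,2;Y,X] = n⁻¹ Σ_{i=1}^n T₁(y_i; F̃_Y) T₂(x_i; F̃_X) satisfies L̂P[1,2;Y,X] = (6√5/(n² √(n₁ n₂))) Σ_{i=n₁+1}^n { (R_i − (n+1)/2)² − (n²−1)/12 }, i.e., it equals the Mood scale statistic up to an asymptotically negligible factor. -/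

import Mathlib

/-!
Since the observations are distinct, the ranks are a permutation of `1, …, n`, so the centred
scores `(R i - (n + 1) / 2) ^ 2 - (n ^ 2 - 1) / 12` sum to zero over the whole sample. The basis
function `T₁` takes the value `-√(n₂/n₁)` on the first sample and `√(n₁/n₂)` on the second,
hence has mean zero, so only the centred part of `T₂` contributes to the comean, and the
contributions of the two samples combine into `(√(n₂/n₁) + √(n₁/n₂))` times the second-sample
sum, with `√(n₂/n₁) + √(n₁/n₂) = n / √(n₁ n₂)`.
-/

open Finset

section SampleRank

variable {ι α : Type*} [Fintype ι] [LinearOrder α]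

def sampleRank (x : ι → α) (i : ι) : ℕ := (univ.filter fun j => x j ≤ x i).card

lemma sampleRank_lt_sampleRank {x : ι → α} {i j : ι} (h : x i < x j) :
    sampleRank x i < sampleRank x j :=
  card_lt_card ⟨fun k hk => mem_filter.2 ⟨mem_univ k, (mem_filter.1 hk).2.trans h.le⟩,
    fun hsub => (mem_filter.1 (hsub (mem_filter.2 ⟨mem_univ j, le_rfl⟩))).2.not_gt h⟩

lemma sampleRank_injective {x : ι → α} (hx : Function.Injective x) :
    Function.Injective (sampleRank x) := by
  intro i j hij
  rcases lt_trichotomy (x i) (x j) with h | h | h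
  · exact absurd hij (sampleRank_lt_sampleRank h).ne
  · exact hx h
  · exact absurd hij (sampleRank_lt_sampleRank h).ne'

lemma sampleRank_mem_Icc (x : ι → α) (i : ι) : sampleRank x i ∈ Icc 1 (Fintype.card ι) :=
  mem_Icc.2 ⟨card_pos.2 ⟨i, mem_filter.2 ⟨mem_univ i, le_rfl⟩⟩, card_le_univ _⟩

lemma image_sampleRank {x : ι → α} (hx : Function.Injective x) :
    univ.image (sampleRank x) = Icc 1 (Fintype.card ι) :=
  eq_of_subset_of_card_le (image_subset_iff.2 fun i _ => sampleRank_mem_Icc x i) <| by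
    rw [Nat.card_Icc, card_image_of_injective _ (sampleRank_injective hx), card_univ,
      Nat.add_sub_cancel]

lemma sum_comp_sampleRank {M : Type*} [AddCommMonoid M] {x : ι → α}
    (hx : Function.Injective x) (f : ℕ → M) :
    ∑ i, f (sampleRank x i) = ∑ r ∈ Icc 1 (Fintype.card ι), f r := by
  rw [← image_sampleRank hx, sum_image fun i _ j _ h => sampleRank_injective hx h]

end SampleRank

lemma Fin.card_filter_le_val {n m : ℕ} : #{i : Fin n | m ≤ (i : ℕ)} = n - m := by
  have := card_filter_add_card_filter_not (s := univ) fun i : Fin n => (i : ℕ) < m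
  simp only [Fin.card_filter_val_lt, not_lt, card_univ, Fintype.card_fin] at this
  omega

lemma sum_Icc_sub_sq (n : ℕ) (c : ℝ) :
    ∑ r ∈ Icc 1 n, ((r : ℝ) - c) ^ 2 =
      n * (n + 1) * (2 * n + 1) / 6 - c * n * (n + 1) + n * c ^ 2 := by
  induction n with
  | zero => simp
  | succ n ih => rw [sum_Icc_succ_top (by omega), ih]; push_cast; ring

lemma sum_Icc_sub_midpoint_sq (n : ℕ) :
    ∑ r ∈ Icc 1 n, ((r : ℝ) - ((n : ℝ) + 1) / 2) ^ 2 = (n : ℝ) * ((n : ℝ) ^ 2 - 1) / 12 := by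
  rw [sum_Icc_sub_sq]; ring

lemma sum_mul_eq_of_two_valued {ι : Type*} [Fintype ι] [DecidableEq ι] {s : Finset ι}
    {w g : ι → ℝ} {a b : ℝ} (hs : ∀ i ∈ s, w i = b) (hsc : ∀ i ∉ s, w i = -a)
    (hg : ∑ i, g i = 0) :
    ∑ i, w i * g i = (a + b) * ∑ i ∈ s, g i := by
  have hgc : ∑ i ∈ sᶜ, g i = -∑ i ∈ s, g i := by
    rw [← sum_add_sum_compl s g] at hg; linarith
  have hws : ∑ i ∈ s, w i * g i = b * ∑ i ∈ s, g i := by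
    rw [mul_sum]; exact sum_congr rfl fun i hi => by rw [hs i hi]
  have hwsc : ∑ i ∈ sᶜ, w i * g i = -a * ∑ i ∈ sᶜ, g i := by
    rw [mul_sum]; exact sum_congr rfl fun i hi => by rw [hsc i (mem_compl.1 hi)]
  rw [← sum_add_sum_compl s, hws, hwsc, hgc]
  ring

lemma mul_sqrt_div_eq_sqrt_mul {u : ℝ} (hu : 0 ≤ u) (v : ℝ) : u * √(v / u) = √(u * v) := by
  rcases hu.eq_or_lt with rfl | hu
  · simp
  calc u * √(v / u) = √(u ^ 2) * √(v / u) := by rw [Real.sqrt_sq hu.le]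
    _ = √(u * v) := by rw [← Real.sqrt_mul (sq_nonneg u)]; congr 1; field_simp

lemma sqrt_div_add_sqrt_div {u v : ℝ} (hu : 0 ≤ u) (hv : 0 ≤ v) :
    √(v / u) + √(u / v) = (u + v) / √(u * v) := by
  rcases hu.eq_or_lt with rfl | hu
  · simp
  rcases hv.eq_or_lt with rfl | hv
  · simp
  have huv : 0 < √(u * v) := Real.sqrt_pos.2 (by positivity)
  have hvu : √(v / u) = √(u * v) / u := by
    rw [eq_div_iff hu.ne', mul_comm, mul_sqrt_div_eq_sqrt_mul hu.le]
  have huv' : √(u / v) = √(u * v) / v := by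
    rw [eq_div_iff hv.ne', mul_comm, mul_sqrt_div_eq_sqrt_mul hv.le, mul_comm]
  rw [hvu, huv', div_add_div _ _ hu.ne' hv.ne', div_eq_div_iff (by positivity) huv.ne']
  linear_combination (u + v) * Real.mul_self_sqrt (mul_nonneg hu.le hv.le)

theorem LP_comean_mood_general (n₁ n₂ : ℕ)
    (n : ℕ) (hn : n = n₁ + n₂)
    (x : Fin n → ℝ) (hx : Function.Injective x)
    (R : Fin n → ℕ)
    (hR : ∀ i, R i = (Finset.univ.filter (fun j => x j ≤ x i)).card)
    (TY TX₂ : Fin n → ℝ)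
    (hTY0 : ∀ i : Fin n, (i : ℕ) < n₁ → TY i = -Real.sqrt ((n₂ : ℝ) / n₁))
    (hTY1 : ∀ i : Fin n, n₁ ≤ (i : ℕ) → TY i = Real.sqrt ((n₁ : ℝ) / n₂))
    (hTX : ∀ i, TX₂ i = (6 * Real.sqrt 5 / (n : ℝ) ^ 2) *
        ((R i : ℝ) - ((n : ℝ) + 1) / 2) ^ 2 - Real.sqrt 5 / 2)
    (LP : ℝ) (hLP : LP = (n : ℝ)⁻¹ * ∑ i, TY i * TX₂ i) :
    LP = (6 * Real.sqrt 5 / ((n : ℝ) ^ 2 * Real.sqrt ((n₁ : ℝ) * n₂))) *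
      ∑ i ∈ Finset.univ.filter (fun i : Fin n => n₁ ≤ (i : ℕ)),
        (((R i : ℝ) - ((n : ℝ) + 1) / 2) ^ 2 - ((n : ℝ) ^ 2 - 1) / 12) := by
  obtain rfl : R = sampleRank x := funext hR
  set s := univ.filter fun i : Fin n => n₁ ≤ (i : ℕ)
  set c := 6 * √5 / (n : ℝ) ^ 2
  set m := ((n : ℝ) ^ 2 - 1) / 12
  set g : Fin n → ℝ := fun i => ((sampleRank x i : ℝ) - ((n : ℝ) + 1) / 2) ^ 2 - m
  have hg : ∑ i, g i = 0 := by
    rw [sum_sub_distrib, sum_comp_sampleRank hx fun r => ((r : ℝ) - ((n : ℝ) + 1) / 2) ^ 2,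
      Fintype.card_fin, sum_Icc_sub_midpoint_sq, sum_const, card_fin, nsmul_eq_mul]
    ring
  have hTY_s (i) (hi : i ∈ s) : TY i = √(n₁ / n₂) := hTY1 i (mem_filter.1 hi).2
  have hTY_sc (i) (hi : i ∉ s) : TY i = -√(n₂ / n₁) := hTY0 i (by simpa [s] using hi)
  have hcard_s : #s = n₂ := by rw [Fin.card_filter_le_val]; omega
  have hcard_sc : #sᶜ = n₁ := by
    rw [compl_filter]; simp only [not_le, Fin.card_filter_val_lt]; omega
  have hTY_sum : ∑ i, TY i = 0 := by
    rw [← sum_add_sum_compl s, sum_congr rfl hTY_s,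
      sum_congr rfl fun i hi => hTY_sc i (mem_compl.1 hi), sum_const, sum_const, hcard_s,
      hcard_sc, nsmul_eq_mul, nsmul_eq_mul, mul_sqrt_div_eq_sqrt_mul (Nat.cast_nonneg _),
      mul_neg, mul_sqrt_div_eq_sqrt_mul (Nat.cast_nonneg _), mul_comm (n₁ : ℝ), add_neg_cancel]
  have hTX' (i) : TX₂ i = c * g i + (c * m - √5 / 2) := by rw [hTX]; ring
  have hcomean : ∑ i, TY i * TX₂ i = c * ((√(n₂ / n₁) + √(n₁ / n₂)) * ∑ i ∈ s, g i) := by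
    simp_rw [hTX', mul_add, sum_add_distrib, ← sum_mul, hTY_sum, zero_mul, add_zero,
      mul_left_comm _ c, ← mul_sum, sum_mul_eq_of_two_valued hTY_s hTY_sc hg]
  rw [hLP, hcomean, sqrt_div_add_sqrt_div (Nat.cast_nonneg _) (Nat.cast_nonneg _),
    ← Nat.cast_add, ← hn]
  rcases eq_or_ne (n : ℝ) 0 with h | h
  · simp [c, h]
  · simp only [c]; field_simp

/-- (LP-representation of the Mood statistic.)
For two-sample data with labels `y_i = 0` for `i ≤ n₁`, `y_i = 1` for `i > n₁`
(`n = n₁ + n₂`), distinct observations `x` with ranks `R i = #{j : x j ≤ x i}`,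
first LP-basis values `TY i = −√(n₂/n₁)` for `i ≤ n₁`, `TY i = √(n₁/n₂)` for
`i > n₁`, and second LP-basis values
`TX₂ i = (6√5/n²)(R i − (n+1)/2)² − √5/2`, the empirical LP-comean
`L̂P[1,2] = n⁻¹ ∑ᵢ TY i * TX₂ i` equals
`(6√5/(n² √(n₁ n₂))) ∑_{i>n₁} ((R i − (n+1)/2)² − (n²−1)/12)`. -/
theorem LP_comean_mood (n₁ n₂ : ℕ) (h₁ : 1 ≤ n₁) (h₂ : 1 ≤ n₂)
    (n : ℕ) (hn : n = n₁ + n₂)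
    (x : Fin n → ℝ) (hx : Function.Injective x)
    (R : Fin n → ℕ)
    (hR : ∀ i, R i = (Finset.univ.filter (fun j => x j ≤ x i)).card)
    (TY TX₂ : Fin n → ℝ)
    (hTY0 : ∀ i : Fin n, (i : ℕ) < n₁ → TY i = -Real.sqrt ((n₂ : ℝ) / n₁))
    (hTY1 : ∀ i : Fin n, n₁ ≤ (i : ℕ) → TY i = Real.sqrt ((n₁ : ℝ) / n₂))
    (hTX : ∀ i, TX₂ i = (6 * Real.sqrt 5 / (n : ℝ) ^ 2) *
        ((R i : ℝ) - ((n : ℝ) + 1) / 2) ^ 2 - Real.sqrt 5 / 2)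
    (LP : ℝ) (hLP : LP = (n : ℝ)⁻¹ * ∑ i, TY i * TX₂ i) :
    LP = (6 * Real.sqrt 5 / ((n : ℝ) ^ 2 * Real.sqrt ((n₁ : ℝ) * n₂))) *
      ∑ i ∈ Finset.univ.filter (fun i : Fin n => n₁ ≤ (i : ℕ)),
        (((R i : ℝ) - ((n : ℝ) + 1) / 2) ^ 2 - ((n : ℝ) ^ 2 - 1) / 12) :=
  LP_comean_mood_general n₁ n₂ n hn x hx R hR TY TX₂ hTY0 hTY1 hTX LP hLP
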